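/- Let A be a bounded normal operator on a complex Hilbert space H and y ∈ H with Ay ≠ 0. Then for all m, n ≥ 0, ‖A^{m+n}y‖/‖A^n y‖ ≥ (‖Ay‖/‖y‖)^m. -/

import Mathlib

open scoped ComplexInnerProductSpace

lemma aux_norm_adjoint {H : Type*} [NormedAddCommGroup H] [InnerProductSpace ℂ H]
    [CompleteSpace H] (A : H →L[ℂ] H) (hA : IsStarNormal A) (x : H) :
    ‖ContinuousLinearMap.adjoint A x‖ = ‖A x‖ := by
  have hc : A * ContinuousLinearMap.adjoint A = ContinuousLinearMap.adjoint A * A := by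
    have := hA.star_comm_self
    rw [ContinuousLinearMap.star_eq_adjoint] at this
    exact this.symm
  have h1 : (⟪ContinuousLinearMap.adjoint A x, ContinuousLinearMap.adjoint A x⟫)
      = ⟪A x, A x⟫ := by
    rw [ContinuousLinearMap.adjoint_inner_left]
    have hx : A (ContinuousLinearMap.adjoint A x) = ContinuousLinearMap.adjoint A (A x) := by
      have := congrArg (fun T : H →L[ℂ] H => T x) hc
      simpa using this
    rw [hx, ContinuousLinearMap.adjoint_inner_right]
  rw [inner_self_eq_norm_sq_to_K (𝕜 := ℂ), inner_self_eq_norm_sq_to_K (𝕜 := ℂ)] at h1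
  have h2 : ‖ContinuousLinearMap.adjoint A x‖ ^ 2 = ‖A x‖ ^ 2 := by exact_mod_cast h1
  have h3 := congrArg Real.sqrt h2
  simpa [Real.sqrt_sq, norm_nonneg] using h3

lemma aux_key {H : Type*} [NormedAddCommGroup H] [InnerProductSpace ℂ H]
    [CompleteSpace H] (A : H →L[ℂ] H) (hA : IsStarNormal A) (x : H) :
    ‖A x‖ ^ 2 ≤ ‖A (A x)‖ * ‖x‖ := by
  calc ‖A x‖ ^ 2 = Complex.re ⟪A x, A x⟫ := (inner_self_eq_norm_sq (𝕜 := ℂ) _).symm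
    _ = Complex.re ⟪ContinuousLinearMap.adjoint A (A x), x⟫ := by
        rw [ContinuousLinearMap.adjoint_inner_left]
    _ ≤ ‖(⟪ContinuousLinearMap.adjoint A (A x), x⟫ : ℂ)‖ := by
        simpa using Complex.re_le_norm _
    _ ≤ ‖ContinuousLinearMap.adjoint A (A x)‖ * ‖x‖ := norm_inner_le_norm _ _
    _ = ‖A (A x)‖ * ‖x‖ := by rw [aux_norm_adjoint A hA]

/-- For a bounded normal operator `A` and `y` with `Ay ≠ 0`, for all `m, n ≥ 0`
we have `‖A^{m+n}y‖/‖A^n y‖ ≥ (‖Ay‖/‖y‖)^m`. -/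
theorem stmt_3 {H : Type*} [NormedAddCommGroup H] [InnerProductSpace ℂ H] [CompleteSpace H]
    (A : H →L[ℂ] H) (hA : IsStarNormal A) (y : H) (hy : A y ≠ 0) :
    ∀ m n : ℕ, (‖A y‖ / ‖y‖) ^ m ≤ ‖(A ^ (m + n)) y‖ / ‖(A ^ n) y‖ := by
  have hy0 : y ≠ 0 := by rintro rfl; simp at hy
  have hpow : ∀ k : ℕ, (A ^ (k + 1)) y = A ((A ^ k) y) := by
    intro k
    rw [pow_succ']
    rfl
  have hkey : ∀ k : ℕ, ‖(A ^ (k + 1)) y‖ ^ 2 ≤ ‖(A ^ (k + 2)) y‖ * ‖(A ^ k) y‖ := by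
    intro k
    have h := aux_key A hA ((A ^ k) y)
    rw [show k + 2 = (k + 1) + 1 from rfl, hpow (k + 1), hpow k]
    exact h
  have hnz : ∀ k : ℕ, (A ^ k) y ≠ 0 := by
    intro k
    induction k with
    | zero => simpa using hy0
    | succ n ih =>
      intro h0
      cases n with
      | zero => exact hy (by simpa [hpow 0] using h0)
      | succ m =>
        have hle : ‖(A ^ (m + 1)) y‖ ^ 2 ≤ 0 := by
          have h := hkey m
          rw [show m + 2 = m + 1 + 1 from rfl, h0] at h
          simpa using h
        have hz : ‖(A ^ (m + 1)) y‖ = 0 := by nlinarith [norm_nonneg ((A ^ (m + 1)) y)]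
        exact ih (norm_eq_zero.mp hz)
  have hnpos : ∀ k : ℕ, 0 < ‖(A ^ k) y‖ := fun k => norm_pos_iff.mpr (hnz k)
  set r : ℕ → ℝ := fun k => ‖(A ^ (k + 1)) y‖ / ‖(A ^ k) y‖ with hr
  have hrpos : ∀ k, 0 < r k := fun k => div_pos (hnpos _) (hnpos _)
  have hmono : ∀ k, r k ≤ r (k + 1) := by
    intro k
    rw [hr]
    simp only
    rw [div_le_div_iff₀ (hnpos k) (hnpos (k + 1))]
    have := hkey k
    nlinarith [hnpos k, hnpos (k + 1), hnpos (k + 2)]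
  have hmono' : ∀ k, r 0 ≤ r k := by
    intro k
    induction k with
    | zero => exact le_rfl
    | succ n ih => exact ih.trans (hmono n)
  have hr0 : r 0 = ‖A y‖ / ‖y‖ := by
    rw [hr]
    simp [hpow 0]
  intro m
  induction m with
  | zero =>
    intro n
    rw [pow_zero, zero_add, div_self (ne_of_gt (hnpos n))]
  | succ m ih =>
    intro n
    have h1 : ‖(A ^ (m + 1 + n)) y‖ / ‖(A ^ n) y‖
        = r (m + n) * (‖(A ^ (m + n)) y‖ / ‖(A ^ n) y‖) := by
      rw [hr]
      simp only
      rw [show m + 1 + n = m + n + 1 by omega, div_mul_div_comm,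
        div_eq_div_iff (ne_of_gt (hnpos n)) (ne_of_gt (mul_pos (hnpos (m + n)) (hnpos n)))]
      ring
    rw [h1, pow_succ, mul_comm ((‖A y‖ / ‖y‖) ^ m)]
    have h2 : ‖A y‖ / ‖y‖ ≤ r (m + n) := hr0 ▸ hmono' (m + n)
    have h3 := ih n
    have h4 : (0:ℝ) ≤ ‖A y‖ / ‖y‖ := div_nonneg (norm_nonneg _) (norm_nonneg _)
    exact mul_le_mul h2 h3 (pow_nonneg h4 m) (le_of_lt (hrpos (m + n)))
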